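/- Finite speed of propagation: under the standing Assumption on I, J (interactions a_{ij} ≤ e^{-|i-j|}, row/column sums ≤ η, ∂_x J_i ≤ 0), for f ∈ D² depending on finitely many coordinates Λ(f), any k ∉ Λ(f), and any 0 < A ≤ 1/4, there exists B ≥ 8 such that whenever n_k := ⌊√(dist(k, Λ(f)))⌋ > Bt, the Galerkin semigroup satisfies ‖∂_k P_t^N f‖² ≤ 2 e^{-At - A n_k} |||f|||², where |||f||| = ∑_i ‖∂_i f‖. -/

import Mathlib

open scoped BigOperators

/-- ℓ¹ distance on ℤ^d. -/
def l1dist {d : ℕ} (i j : Fin d → ℤ) : ℕ := ∑ k, (i k - j k).natAbs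

/-- n-fold matrix power of a kernel on ℤ^d. -/
noncomputable def matpow {ι : Type*} [DecidableEq ι] (M : ι → ι → ℝ) : ℕ → ι → ι → ℝ
  | 0 => fun i j => if i = j then 1 else 0
  | n + 1 => fun i j => ∑' k, matpow M n i k * M k j

/-! The entries of `(a + ηδ)ⁿ` decay like `Sⁿ e^{-|k - i|/2}` with `S = ∑_m e^{-|m|/2} + η`: the
weight `e^{-|k - i|/2}` is, up to the factor `S`, a supersolution for one step of the kernel
(a Schur test), because `e^{-|k - j|/2} e^{-|j - i|} ≤ e^{-|k - i|/2} e^{-|j - i|/2}`.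
Summing the exponential series gives `‖∂_k P_t f‖² ≤ e^{St - dist(k, Λ)/2} |||f|||²`, and
`dist(k, Λ) ≥ n_k²` dominates both `St` and `A(t + n_k)` as soon as `n_k > 4(S + 1)t`. -/

open Finset

section Schur

variable {ι : Type*} [DecidableEq ι]

lemma matpow_nonneg {M : ι → ι → ℝ} (hM : ∀ i j, 0 ≤ M i j) (n : ℕ) (k i : ι) :
    0 ≤ matpow M n k i := by
  induction n generalizing i with
  | zero => simp only [matpow]; positivity
  | succ n ih => exact tsum_nonneg fun j => mul_nonneg (ih j) (hM j i)

theorem matpow_le_pow_mul_of_supersolution {M w v : ι → ι → ℝ} {S : ℝ} (hS : 0 ≤ S)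
    (hM : ∀ i j, 0 ≤ M i j) (hw : ∀ k i, 0 ≤ w k i) (hw_diag : ∀ i, 1 ≤ w i i)
    (hwM : ∀ k j i, w k j * M j i ≤ w k i * v j i)
    (hv : ∀ i, Summable (v · i)) (hvS : ∀ i, ∑' j, v j i ≤ S) (n : ℕ) (k i : ι) :
    matpow M n k i ≤ S ^ n * w k i := by
  induction n generalizing i with
  | zero =>
    simp only [matpow, pow_zero, one_mul]
    split_ifs with h
    · exact h ▸ hw_diag k
    · exact hw k i
  | succ n ih =>
    have hstep : ∀ j, matpow M n k j * M j i ≤ S ^ n * w k i * v j i := fun j =>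
      calc matpow M n k j * M j i ≤ S ^ n * w k j * M j i := by gcongr; exacts [hM j i, ih j]
        _ ≤ S ^ n * w k i * v j i := by
          rw [mul_assoc, mul_assoc]; exact mul_le_mul_of_nonneg_left (hwM k j i) (by positivity)
    have hdom : Summable fun j => S ^ n * w k i * v j i := (hv i).mul_left _
    calc matpow M (n + 1) k i = ∑' j, matpow M n k j * M j i := rfl
      _ ≤ ∑' j, S ^ n * w k i * v j i :=
        (hdom.of_nonneg_of_le (fun j => mul_nonneg (matpow_nonneg hM n k j) (hM j i))
          hstep).tsum_le_tsum hstep hdom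
      _ = S ^ n * w k i * ∑' j, v j i := tsum_mul_left
      _ ≤ S ^ (n + 1) * w k i := by
        rw [pow_succ, mul_right_comm _ S]
        exact mul_le_mul_of_nonneg_left (hvS i) (mul_nonneg (by positivity) (hw k i))

end Schur

lemma summable_fintype_pi_prod {ι κ : Type*} [Fintype ι] {f : ι → κ → ℝ}
    (hf0 : ∀ i z, 0 ≤ f i z) (hf : ∀ i, Summable (f i)) :
    Summable fun x : ι → κ => ∏ i, f i (x i) := by
  classical
  refine summable_of_sum_le (c := ∏ i, ∑' z, f i z)
    (fun x => prod_nonneg fun i _ => hf0 i _) fun s => ?_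
  calc ∑ x ∈ s, ∏ i, f i (x i)
      ≤ ∑ x ∈ Fintype.piFinset fun i => s.image (· i), ∏ i, f i (x i) :=
        sum_le_sum_of_subset_of_nonneg
          (fun x hx => Fintype.mem_piFinset.2 fun i => mem_image_of_mem _ hx)
          (fun _ _ _ => prod_nonneg fun i _ => hf0 i _)
    _ = ∏ i, ∑ z ∈ s.image (· i), f i z := (prod_univ_sum _ _).symm
    _ ≤ ∏ i, ∑' z, f i z :=
        prod_le_prod (fun i _ => sum_nonneg fun z _ => hf0 i z)
          fun i _ => (hf i).sum_le_tsum _ fun z _ => hf0 i z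

lemma summable_exp_mul_natAbs {c : ℝ} (hc : c < 0) :
    Summable fun z : ℤ => Real.exp (c * z.natAbs) := by
  have h := Real.summable_exp_nat_mul_iff.2 hc
  refine .of_nat_of_neg ?_ ?_ <;> simpa [mul_comm c] using h

section Lattice

variable {d : ℕ}

lemma l1dist_triangle (i j k : Fin d → ℤ) : l1dist i k ≤ l1dist i j + l1dist j k := by
  rw [l1dist, l1dist, l1dist, ← sum_add_distrib]
  refine sum_le_sum fun x _ => ?_
  rw [← sub_add_sub_cancel (i x) (j x) (k x)]
  exact Int.natAbs_add_le _ _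

@[simp]
lemma l1dist_self (i : Fin d → ℤ) : l1dist i i = 0 := by simp [l1dist]

lemma l1dist_add_right (m i : Fin d → ℤ) : l1dist (m + i) i = l1dist m 0 := by simp [l1dist]

lemma summable_exp_neg_mul_l1dist {r : ℝ} (hr : 0 < r) (i : Fin d → ℤ) :
    Summable fun j : Fin d → ℤ => Real.exp (-r * l1dist j i) := by
  rw [← (Equiv.addRight i).summable_iff]
  have h := summable_fintype_pi_prod (f := fun (_ : Fin d) (z : ℤ) => Real.exp (-r * z.natAbs))
    (fun _ _ => (Real.exp_pos _).le) fun _ => summable_exp_mul_natAbs (neg_neg_of_pos hr)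
  refine h.congr fun m => ?_
  simp [l1dist, ← Real.exp_sum, mul_sum]

lemma tsum_exp_neg_mul_l1dist (r : ℝ) (i : Fin d → ℤ) :
    ∑' j : Fin d → ℤ, Real.exp (-r * l1dist j i) =
      ∑' m : Fin d → ℤ, Real.exp (-r * l1dist m 0) := by
  rw [← (Equiv.addRight i).tsum_eq]
  simp [l1dist_add_right]

lemma exp_half_l1dist_mul_le (k j i : Fin d → ℤ) :
    Real.exp (-(1 / 2) * l1dist k j) * Real.exp (-(l1dist j i : ℝ)) ≤
      Real.exp (-(1 / 2) * l1dist k i) * Real.exp (-(1 / 2) * l1dist j i) := by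
  rw [← Real.exp_add, ← Real.exp_add, Real.exp_le_exp]
  have h : (l1dist k i : ℝ) ≤ l1dist k j + l1dist j i := by exact_mod_cast l1dist_triangle k j i
  linarith

variable {η : ℝ} {a : (Fin d → ℤ) → (Fin d → ℤ) → ℝ}

lemma exp_half_l1dist_mul_kernel_le (hae : ∀ i j, a i j ≤ Real.exp (-(l1dist i j : ℝ)))
    (k j i : Fin d → ℤ) :
    Real.exp (-(1 / 2) * l1dist k j) * (a j i + η * (if j = i then 1 else 0)) ≤
      Real.exp (-(1 / 2) * l1dist k i) *
        (Real.exp (-(1 / 2) * l1dist j i) + η * (if j = i then 1 else 0)) := by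
  by_cases hji : j = i
  · subst hji
    have : a j j ≤ 1 := by simpa using hae j j
    simp only [l1dist_self, if_true, CharP.cast_eq_zero, mul_zero, Real.exp_zero, mul_one]
    gcongr
  · simp only [hji, if_false, mul_zero, add_zero]
    calc Real.exp (-(1 / 2) * l1dist k j) * a j i
        ≤ Real.exp (-(1 / 2) * l1dist k j) * Real.exp (-(l1dist j i : ℝ)) := by
          gcongr; exact hae j i
      _ ≤ _ := exp_half_l1dist_mul_le k j i

theorem exists_matpow_le_pow_mul_exp (hη : 0 ≤ η) (ha0 : ∀ i j, 0 ≤ a i j)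
    (hae : ∀ i j, a i j ≤ Real.exp (-(l1dist i j : ℝ))) :
    ∃ S ≥ 0, ∀ n (k i : Fin d → ℤ),
      matpow (fun i j => a i j + η * (if i = j then 1 else 0)) n k i ≤
        S ^ n * Real.exp (-(1 / 2) * l1dist k i) := by
  set K := ∑' m : Fin d → ℤ, Real.exp (-(1 / 2) * l1dist m 0)
  have hS : 0 ≤ K + η := add_nonneg (tsum_nonneg fun _ => (Real.exp_pos _).le) hη
  have hdelta (i : Fin d → ℤ) : Summable fun j => η * (if j = i then 1 else 0 : ℝ) :=
    summable_of_ne_finset_zero (s := {i}) fun j hj => by simp_all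
  have hv (i : Fin d → ℤ) := (summable_exp_neg_mul_l1dist one_half_pos i).add (hdelta i)
  refine ⟨K + η, hS, matpow_le_pow_mul_of_supersolution hS
    (fun i j => add_nonneg (ha0 i j) (by positivity)) (fun _ _ => (Real.exp_pos _).le)
    (fun i => by simp) (exp_half_l1dist_mul_kernel_le hae) hv fun i => ?_⟩
  rw [(summable_exp_neg_mul_l1dist one_half_pos i).tsum_add (hdelta i),
    tsum_exp_neg_mul_l1dist, tsum_mul_left, tsum_ite_eq, mul_one]

end Lattice

lemma tsum_pow_div_factorial_mul_le {f : ℕ → ℝ} {S X t : ℝ} (ht : 0 ≤ t) (hf0 : ∀ n, 0 ≤ f n)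
    (hf : ∀ n, f n ≤ S ^ n * X) :
    ∑' n : ℕ, t ^ n / n.factorial * f n ≤ Real.exp (S * t) * X := by
  have hle (n : ℕ) : t ^ n / n.factorial * f n ≤ (S * t) ^ n / n.factorial * X := by
    calc t ^ n / n.factorial * f n ≤ t ^ n / n.factorial * (S ^ n * X) := by gcongr; exact hf n
      _ = (S * t) ^ n / n.factorial * X := by ring
  have hdom := (Real.summable_pow_div_factorial (S * t)).mul_right X
  calc ∑' n : ℕ, t ^ n / n.factorial * f n ≤ ∑' n : ℕ, (S * t) ^ n / n.factorial * X :=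
        (hdom.of_nonneg_of_le (fun n => mul_nonneg (by positivity) (hf0 n)) hle).tsum_le_tsum
          hle hdom
    _ = Real.exp (S * t) * X := by
        rw [tsum_mul_right, Real.exp_eq_exp_ℝ, NormedSpace.exp_eq_tsum_div]

lemma tsum_mul_sq_le_of_support {ι : Type*} {Λ : Finset ι} {m c : ι → ℝ} {X : ℝ}
    (hsupp : ∀ i ∉ Λ, c i = 0) (hm : ∀ i ∈ Λ, m i ≤ X) :
    ∑' i, m i * c i ^ 2 ≤ X * ∑ i ∈ Λ, c i ^ 2 := by
  rw [tsum_eq_sum fun i hi => by simp [hsupp i hi], mul_sum]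
  exact sum_le_sum fun i hi => mul_le_mul_of_nonneg_right (hm i hi) (sq_nonneg _)

lemma sub_half_le_of_lt_sqrt {S A t : ℝ} {D : ℕ} (hS : 0 ≤ S) (hA : A ≤ 1 / 4) (ht : 0 ≤ t)
    (hD : 4 * (S + 1) * t < Nat.sqrt D) :
    S * t - D / 2 ≤ -A * t - A * Nat.sqrt D := by
  have hpos : 0 < Nat.sqrt D := by exact_mod_cast (by positivity : (0 : ℝ) ≤ _).trans_lt hD
  have hsq : (Nat.sqrt D : ℝ) ≤ D := by
    exact_mod_cast (Nat.le_mul_self _).trans (Nat.sqrt_le D)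
  nlinarith [mul_le_mul_of_nonneg_right hA ht,
    mul_le_mul_of_nonneg_right hA (Nat.cast_nonneg (Nat.sqrt D) : (0 : ℝ) ≤ _)]

theorem stmt13_general {d : ℕ} (η : ℝ) (hη : 0 < η)
    (a : (Fin d → ℤ) → (Fin d → ℤ) → ℝ)
    (ha0 : ∀ i j, 0 ≤ a i j) (hae : ∀ i j, a i j ≤ Real.exp (-(l1dist i j : ℝ)))
    (Λ : Finset (Fin d → ℤ)) (hΛ : Λ.Nonempty)
    (c : (Fin d → ℤ) → ℝ) (hc0 : ∀ i, 0 ≤ c i) (hsupp : ∀ i ∉ Λ, c i = 0)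
    (g : (Fin d → ℤ) → ℝ → ℝ)
    (hstand : ∀ k, ∀ t ≥ (0 : ℝ), g k t ≤ ∑' n : ℕ, t ^ n / (n.factorial : ℝ) *
      ∑' i, matpow (fun i j => a i j + η * (if i = j then 1 else 0)) n k i * (c i) ^ 2)
    (A : ℝ) (hA4 : A ≤ 1 / 4)
    (k : Fin d → ℤ) :
    ∃ B : ℝ, 8 ≤ B ∧ ∀ t ≥ (0 : ℝ),
      B * t < (Nat.sqrt (Λ.inf' hΛ fun j => l1dist k j) : ℝ) →
      g k t ≤ 2 * Real.exp (-A * t - A * (Nat.sqrt (Λ.inf' hΛ fun j => l1dist k j) : ℝ)) *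
        (∑ i ∈ Λ, c i) ^ 2 := by
  obtain ⟨S, hS, hmatpow⟩ := exists_matpow_le_pow_mul_exp hη.le ha0 hae
  refine ⟨max 8 (4 * (S + 1)), le_max_left _ _, fun t ht hBt => ?_⟩
  set D := Λ.inf' hΛ fun j => l1dist k j
  set M : (Fin d → ℤ) → (Fin d → ℤ) → ℝ := fun i j => a i j + η * (if i = j then 1 else 0)
  have hM0 : ∀ i j, 0 ≤ M i j := fun i j => add_nonneg (ha0 i j) (by positivity)
  have hinner (n : ℕ) : ∑' i, matpow M n k i * c i ^ 2 ≤
      S ^ n * (Real.exp (-(1 / 2) * D) * ∑ i ∈ Λ, c i ^ 2) := by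
    rw [← mul_assoc]
    refine tsum_mul_sq_le_of_support hsupp fun i hi => (hmatpow n k i).trans ?_
    have hDi : (D : ℝ) ≤ l1dist k i := by exact_mod_cast Λ.inf'_le _ hi
    exact mul_le_mul_of_nonneg_left (Real.exp_le_exp.2 (by linarith)) (pow_nonneg hS n)
  have hexp := sub_half_le_of_lt_sqrt (D := D) hS hA4 ht
    ((mul_le_mul_of_nonneg_right (le_max_right _ _) ht).trans_lt hBt)
  calc g k t ≤ Real.exp (S * t) * (Real.exp (-(1 / 2) * D) * ∑ i ∈ Λ, c i ^ 2) :=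
        (hstand k t ht).trans <| tsum_pow_div_factorial_mul_le ht
          (fun n => tsum_nonneg fun i => mul_nonneg (matpow_nonneg hM0 n k i) (sq_nonneg _)) hinner
    _ = Real.exp (S * t - D / 2) * ∑ i ∈ Λ, c i ^ 2 := by
        rw [← mul_assoc, ← Real.exp_add]; ring_nf
    _ ≤ 1 * Real.exp (-A * t - A * Nat.sqrt D) * (∑ i ∈ Λ, c i) ^ 2 := by
        rw [one_mul]
        gcongr
        exact sum_sq_le_sq_sum_of_nonneg fun i _ => hc0 i
    _ ≤ 2 * Real.exp (-A * t - A * Nat.sqrt D) * (∑ i ∈ Λ, c i) ^ 2 := by gcongr; norm_num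

/-- Finite speed of propagation of information.  Here `c i = ‖∂_i f‖` (supported on the
localization set `Λ` of `f`), `g k t = ‖∂_k P^N_t f‖²`, and the standing gradient
iteration bound `‖∂_k P_t f‖² ≤ ∑_n (tⁿ/n!) ∑_i [(a+ηδ)ⁿ]_{ki} ‖∂_i f‖²` is the
hypothesis `hstand`; `|||f||| = ∑_{i∈Λ} c i`. -/
theorem stmt13 {d : ℕ} (hd : 1 ≤ d) (η : ℝ) (hη : 0 < η)
    (a : (Fin d → ℤ) → (Fin d → ℤ) → ℝ)
    (ha0 : ∀ i j, 0 ≤ a i j) (hae : ∀ i j, a i j ≤ Real.exp (-(l1dist i j : ℝ)))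
    (hrow : ∀ i, ∑' j, a i j ≤ η) (hcol : ∀ j, ∑' i, a i j ≤ η)
    (Λ : Finset (Fin d → ℤ)) (hΛ : Λ.Nonempty)
    (c : (Fin d → ℤ) → ℝ) (hc0 : ∀ i, 0 ≤ c i) (hsupp : ∀ i ∉ Λ, c i = 0)
    (g : (Fin d → ℤ) → ℝ → ℝ) (hg0 : ∀ k t, 0 ≤ g k t)
    (hstand : ∀ k, ∀ t ≥ (0 : ℝ), g k t ≤ ∑' n : ℕ, t ^ n / (n.factorial : ℝ) *
      ∑' i, matpow (fun i j => a i j + η * (if i = j then 1 else 0)) n k i * (c i) ^ 2)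
    (A : ℝ) (hA : 0 < A) (hA4 : A ≤ 1 / 4)
    (k : Fin d → ℤ) (hk : k ∉ Λ) :
    ∃ B : ℝ, 8 ≤ B ∧ ∀ t ≥ (0 : ℝ),
      B * t < (Nat.sqrt (Λ.inf' hΛ fun j => l1dist k j) : ℝ) →
      g k t ≤ 2 * Real.exp (-A * t - A * (Nat.sqrt (Λ.inf' hΛ fun j => l1dist k j) : ℝ)) *
        (∑ i ∈ Λ, c i) ^ 2 :=
  stmt13_general η hη a ha0 hae Λ hΛ c hc0 hsupp g hstand A hA4 k
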